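/- arXiv:1901.04628 — 6 statements merged into one kernel-verified Lean document; each statement's English description precedes it below -/
import Mathlib

section
/- Upper bound relating the H-metric to the D-metric (pointwise): let S ⊆ ℝ^d be a finite nonempty set and π : ℝ^d → ℝ^d a nearest-point map onto S (π(x) ∈ S and ‖x − π(x)‖² ≤ ‖x − s‖² for all s ∈ S). Define h(x,y) = ‖x − π(x)‖² + ‖π(x) − π(y)‖² + ‖π(y) − y‖². Then for all x_p, x_q ∈ ℝ^d, h(x_p, x_q) ≤ 11‖x_p − x_q‖² + 12‖x_p − π(x_p)‖². -/
theorem H_le_D_pointwise (d : ℕ)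
    (S : Finset (EuclideanSpace ℝ (Fin d))) (hS : S.Nonempty)
    (π : EuclideanSpace ℝ (Fin d) → EuclideanSpace ℝ (Fin d))
    (hπS : ∀ x, π x ∈ S)
    (hπnear : ∀ x, ∀ s ∈ S, ‖x - π x‖ ^ 2 ≤ ‖x - s‖ ^ 2)
    (xp xq : EuclideanSpace ℝ (Fin d)) :
    ‖xp - π xp‖ ^ 2 + ‖π xp - π xq‖ ^ 2 + ‖π xq - xq‖ ^ 2 ≤
      11 * ‖xp - xq‖ ^ 2 + 12 * ‖xp - π xp‖ ^ 2 := by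
  have hC1 : ‖xq - π xq‖ ^ 2 ≤ ‖xq - π xp‖ ^ 2 := hπnear xq (π xp) (hπS xp)
  have htri1 : ‖xq - π xp‖ ≤ ‖xq - xp‖ + ‖xp - π xp‖ := by
    calc ‖xq - π xp‖ = ‖(xq - xp) + (xp - π xp)‖ := by abel_nf
    _ ≤ ‖xq - xp‖ + ‖xp - π xp‖ := norm_add_le _ _
  have hC2 : ‖xq - π xp‖ ^ 2 ≤ (‖xq - xp‖ + ‖xp - π xp‖) ^ 2 := by
    have := norm_nonneg (xq - π xp)
    nlinarith [norm_nonneg (xq - xp), norm_nonneg (xp - π xp)]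
  have htri2 : ‖π xp - π xq‖ ≤ ‖π xp - xp‖ + ‖xp - xq‖ + ‖xq - π xq‖ := by
    calc ‖π xp - π xq‖ = ‖(π xp - xp) + (xp - xq) + (xq - π xq)‖ := by abel_nf
    _ ≤ ‖(π xp - xp) + (xp - xq)‖ + ‖xq - π xq‖ := norm_add_le _ _
    _ ≤ ‖π xp - xp‖ + ‖xp - xq‖ + ‖xq - π xq‖ := by
        have := norm_add_le (π xp - xp) (xp - xq); linarith
  have h1 : ‖π xp - xp‖ = ‖xp - π xp‖ := norm_sub_rev _ _
  have h2 : ‖π xq - xq‖ = ‖xq - π xq‖ := norm_sub_rev _ _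
  have h3 : ‖xq - xp‖ = ‖xp - xq‖ := norm_sub_rev _ _
  rw [h2]
  set A := ‖xp - xq‖
  set B := ‖xp - π xp‖
  set C := ‖xq - π xq‖
  set E := ‖π xp - π xq‖
  have hA : 0 ≤ A := norm_nonneg _
  have hB : 0 ≤ B := norm_nonneg _
  have hC : 0 ≤ C := norm_nonneg _
  have hE : 0 ≤ E := norm_nonneg _
  have hCle : C ≤ A + B := by nlinarith
  have hEle : E ≤ 2 * A + 2 * B := by linarith
  nlinarith [sq_nonneg (A - B), mul_le_mul hEle hEle hE (by linarith),
    mul_le_mul hCle hCle hC (by linarith)]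
end

section
/- Two-sided cost comparison (Lemma 4 of the paper, summed form): let X = {x_1,…,x_n} ⊆ ℝ^d be a finite point set (given as x : Fin n → ℝ^d), S ⊆ ℝ^d a finite nonempty set with nearest-point map π onto S, and h the H-distance with respect to S and π. For any assignment σ : Fin n → ℝ^d (assigning each data point x_j to a point σ(j)), let cost_D(σ) = Σ_j ‖x_j − σ(j)‖², cost_H(σ) = Σ_j h(x_j, σ(j)), and cost_D(S) = Σ_j ‖x_j − π(x_j)‖². Then (1/3)·cost_D(σ) ≤ cost_H(σ) ≤ 11·cost_D(σ) + 12·cost_D(S). -/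
set_option maxHeartbeats 1000000


theorem two_sided_cost_comparison (d n : ℕ)
    (x : Fin n → EuclideanSpace ℝ (Fin d))
    (S : Finset (EuclideanSpace ℝ (Fin d))) (hS : S.Nonempty)
    (π : EuclideanSpace ℝ (Fin d) → EuclideanSpace ℝ (Fin d))
    (hπS : ∀ y, π y ∈ S)
    (hπnear : ∀ y, ∀ s ∈ S, ‖y - π y‖ ^ 2 ≤ ‖y - s‖ ^ 2)
    (σ : Fin n → EuclideanSpace ℝ (Fin d)) :
    (1 / 3) * (∑ j, ‖x j - σ j‖ ^ 2) ≤
        (∑ j, (‖x j - π (x j)‖ ^ 2 + ‖π (x j) - π (σ j)‖ ^ 2 +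
          ‖π (σ j) - σ j‖ ^ 2)) ∧
      (∑ j, (‖x j - π (x j)‖ ^ 2 + ‖π (x j) - π (σ j)‖ ^ 2 +
          ‖π (σ j) - σ j‖ ^ 2)) ≤
        11 * (∑ j, ‖x j - σ j‖ ^ 2) + 12 * (∑ j, ‖x j - π (x j)‖ ^ 2) := by
  constructor
  · rw [Finset.mul_sum]
    apply Finset.sum_le_sum
    intro j _
    have t1 : ‖x j - σ j‖ ≤ ‖x j - π (x j)‖ + ‖π (x j) - π (σ j)‖ +
        ‖π (σ j) - σ j‖ := by
      have := dist_triangle4 (x j) (π (x j)) (π (σ j)) (σ j)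
      simpa [dist_eq_norm] using this
    nlinarith [norm_nonneg (x j - σ j), norm_nonneg (x j - π (x j)),
      norm_nonneg (π (x j) - π (σ j)), norm_nonneg (π (σ j) - σ j),
      sq_nonneg (‖x j - π (x j)‖ - ‖π (x j) - π (σ j)‖),
      sq_nonneg (‖x j - π (x j)‖ - ‖π (σ j) - σ j‖),
      sq_nonneg (‖π (x j) - π (σ j)‖ - ‖π (σ j) - σ j‖)]
  · rw [show (11 : ℝ) * (∑ j, ‖x j - σ j‖ ^ 2) + 12 * (∑ j, ‖x j - π (x j)‖ ^ 2)
      = ∑ j, (11 * ‖x j - σ j‖ ^ 2 + 12 * ‖x j - π (x j)‖ ^ 2) by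
        rw [Finset.sum_add_distrib, Finset.mul_sum, Finset.mul_sum]]
    apply Finset.sum_le_sum
    intro j _
    have t2 : ‖π (x j) - π (σ j)‖ ≤ ‖π (x j) - x j‖ + ‖x j - σ j‖ +
        ‖σ j - π (σ j)‖ := by
      have := dist_triangle4 (π (x j)) (x j) (σ j) (π (σ j))
      simpa [dist_eq_norm] using this
    have hC : ‖σ j - π (σ j)‖ ^ 2 ≤ ‖σ j - π (x j)‖ ^ 2 :=
      hπnear (σ j) (π (x j)) (hπS (x j))
    have t3 : ‖σ j - π (x j)‖ ≤ ‖σ j - x j‖ + ‖x j - π (x j)‖ := by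
      have := dist_triangle (σ j) (x j) (π (x j))
      simpa [dist_eq_norm] using this
    have e1 : ‖π (x j) - x j‖ = ‖x j - π (x j)‖ := norm_sub_rev _ _
    have e2 : ‖σ j - π (σ j)‖ = ‖π (σ j) - σ j‖ := norm_sub_rev _ _
    have e3 : ‖σ j - x j‖ = ‖x j - σ j‖ := norm_sub_rev _ _
    rw [e1, e2] at t2
    rw [e3] at t3
    rw [e2] at hC
    set A := ‖x j - π (x j)‖ with hA
    set D := ‖x j - σ j‖ with hD
    set B := ‖π (x j) - π (σ j)‖ with hB
    set C := ‖π (σ j) - σ j‖ with hCdef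
    have hA0 : 0 ≤ A := norm_nonneg _
    have hD0 : 0 ≤ D := norm_nonneg _
    have hB0 : 0 ≤ B := norm_nonneg _
    have hC0 : 0 ≤ C := norm_nonneg _
    have hT0 : 0 ≤ ‖σ j - π (x j)‖ := norm_nonneg _
    have hBsq : B ^ 2 ≤ (A + D + C) ^ 2 := by nlinarith
    have hCle : C ≤ D + A := by
      have h1 : ‖σ j - π (x j)‖ ^ 2 ≤ (D + A) ^ 2 := by nlinarith
      nlinarith
    have h2 : C * (D + A) ≤ (D + A) * (D + A) :=
      mul_le_mul_of_nonneg_right hCle (by linarith)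
    have h3 : C ^ 2 ≤ (D + A) ^ 2 := by nlinarith
    clear t2 t3 hC e1 e2 e3 hπnear hπS hS hT0
    nlinarith [hBsq, h2, h3, sq_nonneg (A - D)]
end

section
/- Cluster relocation bound: let S ⊆ ℝ^d be a finite nonempty set and π a nearest-point map onto S fixing S pointwise, h the H-distance with respect to S and π. For any finite cluster A ⊆ ℝ^d (a Finset of ℝ^d) and any center c′ ∈ ℝ^d, Σ_{x∈A} h(x, π(c′)) = Σ_{x∈A} h(x, c′) − |A|·‖c′ − π(c′)‖², and hence Σ_{x∈A} h(x, π(c′)) ≤ Σ_{x∈A} h(x, c′). -/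
theorem cluster_relocation_bound (d : ℕ)
    (S : Finset (EuclideanSpace ℝ (Fin d))) (hS : S.Nonempty)
    (π : EuclideanSpace ℝ (Fin d) → EuclideanSpace ℝ (Fin d))
    (hπS : ∀ y, π y ∈ S)
    (hπnear : ∀ y, ∀ s ∈ S, ‖y - π y‖ ^ 2 ≤ ‖y - s‖ ^ 2)
    (hfix : ∀ s ∈ S, π s = s)
    (A : Finset (EuclideanSpace ℝ (Fin d)))
    (c' : EuclideanSpace ℝ (Fin d)) :
    (∑ x ∈ A, (‖x - π x‖ ^ 2 + ‖π x - π (π c')‖ ^ 2 + ‖π (π c') - π c'‖ ^ 2) =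
      ∑ x ∈ A, (‖x - π x‖ ^ 2 + ‖π x - π c'‖ ^ 2 + ‖π c' - c'‖ ^ 2) -
        (A.card : ℝ) * ‖c' - π c'‖ ^ 2) ∧
      ∑ x ∈ A, (‖x - π x‖ ^ 2 + ‖π x - π (π c')‖ ^ 2 + ‖π (π c') - π c'‖ ^ 2) ≤
        ∑ x ∈ A, (‖x - π x‖ ^ 2 + ‖π x - π c'‖ ^ 2 + ‖π c' - c'‖ ^ 2) := by
  have hpp : π (π c') = π c' := hfix _ (hπS c')
  have hrev : ‖π c' - c'‖ = ‖c' - π c'‖ := norm_sub_rev _ _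
  have heq : ∑ x ∈ A, (‖x - π x‖ ^ 2 + ‖π x - π (π c')‖ ^ 2 + ‖π (π c') - π c'‖ ^ 2) =
      ∑ x ∈ A, (‖x - π x‖ ^ 2 + ‖π x - π c'‖ ^ 2 + ‖π c' - c'‖ ^ 2) -
        (A.card : ℝ) * ‖c' - π c'‖ ^ 2 := by
    rw [eq_sub_iff_add_eq, ← nsmul_eq_mul, ← Finset.sum_const, ← Finset.sum_add_distrib]
    apply Finset.sum_congr rfl
    intro x _
    simp [hpp, hrev]
  refine ⟨heq, ?_⟩
  rw [heq]
  have : (0:ℝ) ≤ (A.card : ℝ) * ‖c' - π c'‖ ^ 2 := by positivity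
  linarith
end

section
/- Optimal H-metric centers may be taken in S: let x : Fin n → ℝ^d be a data set, u ∈ ℕ a capacity, S ⊆ ℝ^d a finite nonempty set, π a nearest-point map onto S fixing S pointwise, and h the H-distance with respect to S and π. For every feasible solution (c : Fin k → ℝ^d, f : Fin n → Fin k) — i.e., every fiber of f has at most u elements — the pair (π ∘ c, f) is also feasible and Σ_j h(x_j, π(c(f(j)))) ≤ Σ_j h(x_j, c(f(j))). Consequently, the infimum of Σ_j h(x_j, c(f(j))) over feasible solutions with all centers in S equals the infimum over all feasible solutions. -/
theorem optimal_H_centers_in_S (d n k u : ℕ)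
    (x : Fin n → EuclideanSpace ℝ (Fin d))
    (S : Finset (EuclideanSpace ℝ (Fin d))) (hS : S.Nonempty)
    (π : EuclideanSpace ℝ (Fin d) → EuclideanSpace ℝ (Fin d))
    (hπS : ∀ y, π y ∈ S)
    (hπnear : ∀ y, ∀ s ∈ S, ‖y - π y‖ ^ 2 ≤ ‖y - s‖ ^ 2)
    (hfix : ∀ s ∈ S, π s = s) :
    (∀ (c : Fin k → EuclideanSpace ℝ (Fin d)) (f : Fin n → Fin k),
      (∀ i : Fin k, (Finset.univ.filter (fun j => f j = i)).card ≤ u) →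
        ((∀ i : Fin k, (Finset.univ.filter (fun j => f j = i)).card ≤ u) ∧
          ∑ j, (‖x j - π (x j)‖ ^ 2 + ‖π (x j) - π (π (c (f j)))‖ ^ 2 +
              ‖π (π (c (f j))) - π (c (f j))‖ ^ 2) ≤
            ∑ j, (‖x j - π (x j)‖ ^ 2 + ‖π (x j) - π (c (f j))‖ ^ 2 +
              ‖π (c (f j)) - c (f j)‖ ^ 2))) ∧
    sInf {r : ℝ | ∃ (c : Fin k → EuclideanSpace ℝ (Fin d)) (f : Fin n → Fin k),
        (∀ i : Fin k, (Finset.univ.filter (fun j => f j = i)).card ≤ u) ∧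
        (∀ i : Fin k, c i ∈ S) ∧
        r = ∑ j, (‖x j - π (x j)‖ ^ 2 + ‖π (x j) - π (c (f j))‖ ^ 2 +
          ‖π (c (f j)) - c (f j)‖ ^ 2)} =
      sInf {r : ℝ | ∃ (c : Fin k → EuclideanSpace ℝ (Fin d)) (f : Fin n → Fin k),
        (∀ i : Fin k, (Finset.univ.filter (fun j => f j = i)).card ≤ u) ∧
        r = ∑ j, (‖x j - π (x j)‖ ^ 2 + ‖π (x j) - π (c (f j))‖ ^ 2 +
          ‖π (c (f j)) - c (f j)‖ ^ 2)} := by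
  have key : ∀ (c : Fin k → EuclideanSpace ℝ (Fin d)) (f : Fin n → Fin k),
      ∑ j, (‖x j - π (x j)‖ ^ 2 + ‖π (x j) - π (π (c (f j)))‖ ^ 2 +
          ‖π (π (c (f j))) - π (c (f j))‖ ^ 2) ≤
        ∑ j, (‖x j - π (x j)‖ ^ 2 + ‖π (x j) - π (c (f j))‖ ^ 2 +
          ‖π (c (f j)) - c (f j)‖ ^ 2) := by
    intro c f
    apply Finset.sum_le_sum
    intro j _
    rw [hfix _ (hπS (c (f j))), sub_self, norm_zero]
    have : (0:ℝ) ≤ ‖π (c (f j)) - c (f j)‖ ^ 2 := by positivity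
    nlinarith [this]
  refine ⟨fun c f hf => ⟨hf, key c f⟩, ?_⟩
  set A := {r : ℝ | ∃ (c : Fin k → EuclideanSpace ℝ (Fin d)) (f : Fin n → Fin k),
        (∀ i : Fin k, (Finset.univ.filter (fun j => f j = i)).card ≤ u) ∧
        (∀ i : Fin k, c i ∈ S) ∧
        r = ∑ j, (‖x j - π (x j)‖ ^ 2 + ‖π (x j) - π (c (f j))‖ ^ 2 +
          ‖π (c (f j)) - c (f j)‖ ^ 2)} with hA
  set B := {r : ℝ | ∃ (c : Fin k → EuclideanSpace ℝ (Fin d)) (f : Fin n → Fin k),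
        (∀ i : Fin k, (Finset.univ.filter (fun j => f j = i)).card ≤ u) ∧
        r = ∑ j, (‖x j - π (x j)‖ ^ 2 + ‖π (x j) - π (c (f j))‖ ^ 2 +
          ‖π (c (f j)) - c (f j)‖ ^ 2)} with hB
  have hAB : A ⊆ B := by
    rintro r ⟨c, f, h1, _, h3⟩
    exact ⟨c, f, h1, h3⟩
  have hbdd : ∀ r ∈ B, (0:ℝ) ≤ r := by
    rintro r ⟨c, f, _, rfl⟩
    apply Finset.sum_nonneg
    intro j _
    positivity
  have hbddA : BddBelow A := ⟨0, fun r hr => hbdd r (hAB hr)⟩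
  have hbddB : BddBelow B := ⟨0, hbdd⟩
  have hdom : ∀ b ∈ B, ∃ a ∈ A, a ≤ b := by
    rintro b ⟨c, f, h1, rfl⟩
    refine ⟨_, ⟨fun i => π (c i), f, h1, fun i => hπS (c i), rfl⟩, key c f⟩
  by_cases hBne : B.Nonempty
  · obtain ⟨b, hb⟩ := hBne
    obtain ⟨a, haA, _⟩ := hdom b hb
    refine le_antisymm ?_ (csInf_le_csInf hbddB ⟨a, haA⟩ hAB)
    refine le_csInf ⟨b, hb⟩ ?_
    intro r hr
    obtain ⟨a', ha'A, ha'r⟩ := hdom r hr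
    exact (csInf_le hbddA ha'A).trans ha'r
  · have hAe : A = ∅ := Set.eq_empty_of_subset_empty
      (hAB.trans (Set.not_nonempty_iff_eq_empty.mp hBne).subset)
    rw [hAe, Set.not_nonempty_iff_eq_empty.mp hBne]
end

section
/- Combination framework (Lemma 6 of the paper): let x : Fin n → ℝ^d be a data set, k ≥ 1, u ∈ ℕ with n ≤ k·u, and λ₁, λ₂ ≥ 0. Let S ⊆ ℝ^d be a finite nonempty set with nearest-point map π onto S, and h the H-distance with respect to S and π. Define opt_KM as the infimum over all (c : Fin k → ℝ^d, f : Fin n → Fin k) of Σ_j ‖x_j − c(f(j))‖²; opt_D as the infimum of Σ_j ‖x_j − c(f(j))‖² over feasible capacitated pairs (every fiber of f has at most u elements); and opt_H as the infimum of Σ_j h(x_j, c(f(j))) over feasible capacitated pairs. Assume Σ_j ‖x_j − π(x_j)‖² ≤ λ₁·opt_KM, and let (c, f) be a feasible capacitated pair with Σ_j h(x_j, c(f(j))) ≤ λ₂·opt_H. Then Σ_j ‖x_j − c(f(j))‖² ≤ 3·λ₂·(11 + 12·λ₁)·opt_D. -/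
theorem combination_framework (d n k u : ℕ)
    (x : Fin n → EuclideanSpace ℝ (Fin d))
    (hk : 1 ≤ k) (hfeas : n ≤ k * u)
    (lam1 lam2 : ℝ) (hlam1 : 0 ≤ lam1) (hlam2 : 0 ≤ lam2)
    (S : Finset (EuclideanSpace ℝ (Fin d))) (hS : S.Nonempty)
    (π : EuclideanSpace ℝ (Fin d) → EuclideanSpace ℝ (Fin d))
    (hπS : ∀ y, π y ∈ S)
    (hπnear : ∀ y, ∀ s ∈ S, ‖y - π y‖ ^ 2 ≤ ‖y - s‖ ^ 2)
    (optKM optD optH : ℝ)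
    (hoptKM : optKM =
      sInf {r : ℝ | ∃ (c : Fin k → EuclideanSpace ℝ (Fin d)) (f : Fin n → Fin k),
        r = ∑ j, ‖x j - c (f j)‖ ^ 2})
    (hoptD : optD =
      sInf {r : ℝ | ∃ (c : Fin k → EuclideanSpace ℝ (Fin d)) (f : Fin n → Fin k),
        (∀ i : Fin k, (Finset.univ.filter (fun j => f j = i)).card ≤ u) ∧
        r = ∑ j, ‖x j - c (f j)‖ ^ 2})
    (hoptH : optH =
      sInf {r : ℝ | ∃ (c : Fin k → EuclideanSpace ℝ (Fin d)) (f : Fin n → Fin k),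
        (∀ i : Fin k, (Finset.univ.filter (fun j => f j = i)).card ≤ u) ∧
        r = ∑ j, (‖x j - π (x j)‖ ^ 2 + ‖π (x j) - π (c (f j))‖ ^ 2 +
          ‖π (c (f j)) - c (f j)‖ ^ 2)})
    (hKMsub : ∑ j, ‖x j - π (x j)‖ ^ 2 ≤ lam1 * optKM)
    (c : Fin k → EuclideanSpace ℝ (Fin d)) (f : Fin n → Fin k)
    (hcap : ∀ i : Fin k, (Finset.univ.filter (fun j => f j = i)).card ≤ u)
    (hHsub : ∑ j, (‖x j - π (x j)‖ ^ 2 + ‖π (x j) - π (c (f j))‖ ^ 2 +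
      ‖π (c (f j)) - c (f j)‖ ^ 2) ≤ lam2 * optH) :
    ∑ j, ‖x j - c (f j)‖ ^ 2 ≤ 3 * lam2 * (11 + 12 * lam1) * optD := by
  classical
  subst hoptKM hoptD hoptH
  -- a feasible assignment exists
  obtain ⟨f0, hf0⟩ : ∃ f0 : Fin n → Fin k, ∀ i : Fin k,
      (Finset.univ.filter (fun j => f0 j = i)).card ≤ u := by
    rcases Nat.eq_zero_or_pos u with hu | hu
    · subst hu
      have hn : n = 0 := by omega
      subst hn
      exact ⟨fun j => j.elim0, fun i => by simp⟩
    · refine ⟨fun j => ⟨j.1 / u, Nat.div_lt_of_lt_mul (lt_of_lt_of_le j.2 (hfeas.trans_eq (Nat.mul_comm k u)))⟩, ?_⟩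
      intro i
      refine le_trans ?_ (Finset.card_range u).le
      apply Finset.card_le_card_of_injOn (fun j : Fin n => j.1 % u)
      · intro j hj
        exact Finset.mem_range.mpr (Nat.mod_lt _ hu)
      · intro j1 h1 j2 h2 hmod
        simp only [Finset.coe_filter, Finset.mem_univ, true_and, Set.mem_setOf_eq] at h1 h2
        have d1 : j1.1 / u = i.1 := congrArg Fin.val h1
        have d2 : j2.1 / u = i.1 := congrArg Fin.val h2
        have d12 : j1.1 / u = j2.1 / u := d1.trans d2.symm
        have m1 := Nat.div_add_mod j1.1 u
        rw [d12] at m1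
        have m2 := Nat.div_add_mod j2.1 u
        simp only at hmod
        exact Fin.ext (by omega)
  -- pointwise triangle inequality for squared distances
  have tri3 : ∀ a b : EuclideanSpace ℝ (Fin d),
      ‖a - b‖ ^ 2 ≤ 3 * (‖a - π a‖ ^ 2 + ‖π a - π b‖ ^ 2 + ‖π b - b‖ ^ 2) := by
    intro a b
    have ht : ‖a - b‖ ≤ ‖a - π a‖ + ‖π a - π b‖ + ‖π b - b‖ := by
      have h := norm_add₃_le (a := a - π a) (b := π a - π b) (c := π b - b)
      rw [sub_add_sub_cancel, sub_add_sub_cancel] at h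
      exact h
    nlinarith [norm_nonneg (a - b), norm_nonneg (a - π a), norm_nonneg (π a - π b),
      norm_nonneg (π b - b), sq_nonneg (‖a - π a‖ - ‖π a - π b‖),
      sq_nonneg (‖a - π a‖ - ‖π b - b‖), sq_nonneg (‖π a - π b‖ - ‖π b - b‖)]
  -- pointwise upper bound on the H-distance
  have key : ∀ a b : EuclideanSpace ℝ (Fin d),
      ‖a - π a‖ ^ 2 + ‖π a - π b‖ ^ 2 + ‖π b - b‖ ^ 2 ≤
        12 * ‖a - π a‖ ^ 2 + 11 * ‖a - b‖ ^ 2 := by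
    intro a b
    have h1 : ‖b - π b‖ ^ 2 ≤ ‖b - π a‖ ^ 2 := hπnear b (π a) (hπS a)
    have h2 : ‖b - π a‖ ≤ ‖a - b‖ + ‖a - π a‖ := by
      have h := norm_add_le (b - a) (a - π a)
      rw [sub_add_sub_cancel] at h
      rwa [norm_sub_rev b a] at h
    have hC : ‖b - π b‖ ≤ ‖a - b‖ + ‖a - π a‖ := by
      nlinarith [norm_nonneg (b - π b), norm_nonneg (b - π a)]
    have h3 : ‖π a - π b‖ ≤ ‖a - π a‖ + ‖a - b‖ + ‖b - π b‖ := by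
      have h := norm_add₃_le (a := π a - a) (b := a - b) (c := b - π b)
      rw [sub_add_sub_cancel, sub_add_sub_cancel] at h
      rwa [norm_sub_rev (π a) a] at h
    have e : ‖π b - b‖ = ‖b - π b‖ := norm_sub_rev _ _
    rw [e]
    nlinarith [norm_nonneg (a - π a), norm_nonneg (a - b), norm_nonneg (b - π b),
      norm_nonneg (π a - π b), sq_nonneg (‖a - b‖ + ‖a - π a‖ - ‖b - π b‖),
      sq_nonneg (‖a - π a‖ - ‖a - b‖),
      sq_nonneg (‖a - π a‖ + ‖a - b‖ + ‖b - π b‖ - ‖π a - π b‖)]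
  -- boundedness of the three sets
  have hKMbdd : BddBelow {r : ℝ | ∃ (c' : Fin k → EuclideanSpace ℝ (Fin d)) (f' : Fin n → Fin k),
      r = ∑ j, ‖x j - c' (f' j)‖ ^ 2} := by
    refine ⟨0, ?_⟩
    rintro r ⟨c', f', rfl⟩
    exact Finset.sum_nonneg fun j _ => sq_nonneg _
  have hDbdd : BddBelow {r : ℝ | ∃ (c' : Fin k → EuclideanSpace ℝ (Fin d)) (f' : Fin n → Fin k),
      (∀ i : Fin k, (Finset.univ.filter (fun j => f' j = i)).card ≤ u) ∧
      r = ∑ j, ‖x j - c' (f' j)‖ ^ 2} := by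
    refine ⟨0, ?_⟩
    rintro r ⟨c', f', -, rfl⟩
    exact Finset.sum_nonneg fun j _ => sq_nonneg _
  have hHbdd : BddBelow {r : ℝ | ∃ (c' : Fin k → EuclideanSpace ℝ (Fin d)) (f' : Fin n → Fin k),
      (∀ i : Fin k, (Finset.univ.filter (fun j => f' j = i)).card ≤ u) ∧
      r = ∑ j, (‖x j - π (x j)‖ ^ 2 + ‖π (x j) - π (c' (f' j))‖ ^ 2 +
        ‖π (c' (f' j)) - c' (f' j)‖ ^ 2)} := by
    refine ⟨0, ?_⟩
    rintro r ⟨c', f', -, rfl⟩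
    exact Finset.sum_nonneg fun j _ => by positivity
  have hDne : {r : ℝ | ∃ (c' : Fin k → EuclideanSpace ℝ (Fin d)) (f' : Fin n → Fin k),
      (∀ i : Fin k, (Finset.univ.filter (fun j => f' j = i)).card ≤ u) ∧
      r = ∑ j, ‖x j - c' (f' j)‖ ^ 2}.Nonempty :=
    ⟨_, fun _ => 0, f0, hf0, rfl⟩
  set Aval := ∑ j, ‖x j - π (x j)‖ ^ 2 with hAval
  -- step 3 : sInf Hset ≤ (11 + 12 lam1) * sInf Dset
  have step3 : sInf {r : ℝ | ∃ (c' : Fin k → EuclideanSpace ℝ (Fin d)) (f' : Fin n → Fin k),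
      (∀ i : Fin k, (Finset.univ.filter (fun j => f' j = i)).card ≤ u) ∧
      r = ∑ j, (‖x j - π (x j)‖ ^ 2 + ‖π (x j) - π (c' (f' j))‖ ^ 2 +
        ‖π (c' (f' j)) - c' (f' j)‖ ^ 2)} ≤
      (11 + 12 * lam1) * sInf {r : ℝ | ∃ (c' : Fin k → EuclideanSpace ℝ (Fin d)) (f' : Fin n → Fin k),
      (∀ i : Fin k, (Finset.univ.filter (fun j => f' j = i)).card ≤ u) ∧
      r = ∑ j, ‖x j - c' (f' j)‖ ^ 2} := by
    have hpos : (0:ℝ) < 11 + 12 * lam1 := by linarith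
    have hmain : ∀ r ∈ {r : ℝ | ∃ (c' : Fin k → EuclideanSpace ℝ (Fin d)) (f' : Fin n → Fin k),
        (∀ i : Fin k, (Finset.univ.filter (fun j => f' j = i)).card ≤ u) ∧
        r = ∑ j, ‖x j - c' (f' j)‖ ^ 2},
        sInf {r : ℝ | ∃ (c' : Fin k → EuclideanSpace ℝ (Fin d)) (f' : Fin n → Fin k),
          (∀ i : Fin k, (Finset.univ.filter (fun j => f' j = i)).card ≤ u) ∧
          r = ∑ j, (‖x j - π (x j)‖ ^ 2 + ‖π (x j) - π (c' (f' j))‖ ^ 2 +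
            ‖π (c' (f' j)) - c' (f' j)‖ ^ 2)} ≤ (11 + 12 * lam1) * r := by
      rintro r ⟨c', f', hcap', rfl⟩
      have hKMle : sInf {r : ℝ | ∃ (c'' : Fin k → EuclideanSpace ℝ (Fin d)) (f'' : Fin n → Fin k),
          r = ∑ j, ‖x j - c'' (f'' j)‖ ^ 2} ≤ ∑ j, ‖x j - c' (f' j)‖ ^ 2 :=
        csInf_le hKMbdd ⟨c', f', rfl⟩
      have hHle : sInf {r : ℝ | ∃ (c'' : Fin k → EuclideanSpace ℝ (Fin d)) (f'' : Fin n → Fin k),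
          (∀ i : Fin k, (Finset.univ.filter (fun j => f'' j = i)).card ≤ u) ∧
          r = ∑ j, (‖x j - π (x j)‖ ^ 2 + ‖π (x j) - π (c'' (f'' j))‖ ^ 2 +
            ‖π (c'' (f'' j)) - c'' (f'' j)‖ ^ 2)} ≤
          ∑ j, (‖x j - π (x j)‖ ^ 2 + ‖π (x j) - π (c' (f' j))‖ ^ 2 +
            ‖π (c' (f' j)) - c' (f' j)‖ ^ 2) :=
        csInf_le hHbdd ⟨c', f', hcap', rfl⟩
      have hsum : ∑ j, (‖x j - π (x j)‖ ^ 2 + ‖π (x j) - π (c' (f' j))‖ ^ 2 +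
            ‖π (c' (f' j)) - c' (f' j)‖ ^ 2) ≤
          12 * Aval + 11 * ∑ j, ‖x j - c' (f' j)‖ ^ 2 := by
        calc ∑ j, (‖x j - π (x j)‖ ^ 2 + ‖π (x j) - π (c' (f' j))‖ ^ 2 +
              ‖π (c' (f' j)) - c' (f' j)‖ ^ 2) ≤
            ∑ j, (12 * ‖x j - π (x j)‖ ^ 2 + 11 * ‖x j - c' (f' j)‖ ^ 2) :=
              Finset.sum_le_sum fun j _ => key (x j) (c' (f' j))
          _ = 12 * Aval + 11 * ∑ j, ‖x j - c' (f' j)‖ ^ 2 := by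
              rw [Finset.sum_add_distrib, ← Finset.mul_sum, ← Finset.mul_sum]
      have hA : Aval ≤ lam1 * ∑ j, ‖x j - c' (f' j)‖ ^ 2 :=
        le_trans hKMsub (mul_le_mul_of_nonneg_left hKMle hlam1)
      linarith
    have hlb : sInf {r : ℝ | ∃ (c' : Fin k → EuclideanSpace ℝ (Fin d)) (f' : Fin n → Fin k),
        (∀ i : Fin k, (Finset.univ.filter (fun j => f' j = i)).card ≤ u) ∧
        r = ∑ j, (‖x j - π (x j)‖ ^ 2 + ‖π (x j) - π (c' (f' j))‖ ^ 2 +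
          ‖π (c' (f' j)) - c' (f' j)‖ ^ 2)} / (11 + 12 * lam1) ≤
        sInf {r : ℝ | ∃ (c' : Fin k → EuclideanSpace ℝ (Fin d)) (f' : Fin n → Fin k),
        (∀ i : Fin k, (Finset.univ.filter (fun j => f' j = i)).card ≤ u) ∧
        r = ∑ j, ‖x j - c' (f' j)‖ ^ 2} := by
      refine le_csInf hDne fun r hr => ?_
      rw [div_le_iff₀ hpos]
      calc _ ≤ (11 + 12 * lam1) * r := hmain r hr
        _ = r * (11 + 12 * lam1) := by ring
    rw [div_le_iff₀ hpos] at hlb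
    linarith [hlb]
  -- step 1 : cost ≤ 3 * H-cost
  have step1 : ∑ j, ‖x j - c (f j)‖ ^ 2 ≤
      3 * ∑ j, (‖x j - π (x j)‖ ^ 2 + ‖π (x j) - π (c (f j))‖ ^ 2 +
        ‖π (c (f j)) - c (f j)‖ ^ 2) := by
    rw [Finset.mul_sum]
    exact Finset.sum_le_sum fun j _ => tri3 (x j) (c (f j))
  have h2' := mul_le_mul_of_nonneg_left step3 hlam2
  nlinarith [step1, hHsub, h2']
end

section
/- Performance guarantee of the algorithm (approximation part of the main Theorem): let x : Fin n → ℝ^d be a data set, k ≥ 1, u ∈ ℕ with n ≤ k·u, and ε > 0. Let S ⊆ ℝ^d be a finite nonempty set with nearest-point map π onto S, and h the H-distance with respect to S and π. Define opt_KM, opt_D and opt_H as in the combination framework (infima of D-cost without capacities, D-cost with capacities, and H-cost with capacities, respectively, over pairs (c : Fin k → ℝ^d, f : Fin n → Fin k)). Assume Σ_j ‖x_j − π(x_j)‖² ≤ (1 + ε/36)·opt_KM, and let (c, f) be a feasible capacitated pair with Σ_j h(x_j, c(f(j))) ≤ opt_H. Then Σ_j ‖x_j − c(f(j))‖² ≤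 (69 + ε)·opt_D. -/
lemma card_div_fiber (n u : ℕ) (hu : 0 < u) (i : ℕ) :
    (Finset.univ.filter (fun j : Fin n => j.val / u = i)).card ≤ u := by
  classical
  have h := Finset.card_le_card_of_injOn
    (f := fun j : Fin n => (⟨j.val % u, Nat.mod_lt _ hu⟩ : Fin u))
    (s := Finset.univ.filter (fun j : Fin n => j.val / u = i))
    (t := Finset.univ) (fun a _ => Finset.mem_univ _) ?_
  · exact h.trans (by simp)
  · intro a ha b hb hab
    have ha' : a.val / u = i := (Finset.mem_filter.mp ha).2
    have hb' : b.val / u = i := (Finset.mem_filter.mp hb).2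
    have hmod : a.val % u = b.val % u := by simpa using congrArg Fin.val hab
    have : a.val = b.val := by
      calc a.val = u * (a.val / u) + a.val % u := (Nat.div_add_mod _ _).symm
        _ = u * (b.val / u) + b.val % u := by rw [ha', hb', hmod]
        _ = b.val := Nat.div_add_mod _ _
    exact Fin.ext this

theorem performance_guarantee (d n k u : ℕ)
    (x : Fin n → EuclideanSpace ℝ (Fin d))
    (hk : 1 ≤ k) (hfeas : n ≤ k * u)
    (ε : ℝ) (hε : 0 < ε)
    (S : Finset (EuclideanSpace ℝ (Fin d))) (hS : S.Nonempty)
    (π : EuclideanSpace ℝ (Fin d) → EuclideanSpace ℝ (Fin d))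
    (hπS : ∀ y, π y ∈ S)
    (hπnear : ∀ y, ∀ s ∈ S, ‖y - π y‖ ^ 2 ≤ ‖y - s‖ ^ 2)
    (optKM optD optH : ℝ)
    (hoptKM : optKM =
      sInf {r : ℝ | ∃ (c : Fin k → EuclideanSpace ℝ (Fin d)) (f : Fin n → Fin k),
        r = ∑ j, ‖x j - c (f j)‖ ^ 2})
    (hoptD : optD =
      sInf {r : ℝ | ∃ (c : Fin k → EuclideanSpace ℝ (Fin d)) (f : Fin n → Fin k),
        (∀ i : Fin k, (Finset.univ.filter (fun j => f j = i)).card ≤ u) ∧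
        r = ∑ j, ‖x j - c (f j)‖ ^ 2})
    (hoptH : optH =
      sInf {r : ℝ | ∃ (c : Fin k → EuclideanSpace ℝ (Fin d)) (f : Fin n → Fin k),
        (∀ i : Fin k, (Finset.univ.filter (fun j => f j = i)).card ≤ u) ∧
        r = ∑ j, (‖x j - π (x j)‖ ^ 2 + ‖π (x j) - π (c (f j))‖ ^ 2 +
          ‖π (c (f j)) - c (f j)‖ ^ 2)})
    (hKMsub : ∑ j, ‖x j - π (x j)‖ ^ 2 ≤ (1 + ε / 36) * optKM)
    (c : Fin k → EuclideanSpace ℝ (Fin d)) (f : Fin n → Fin k)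
    (hcap : ∀ i : Fin k, (Finset.univ.filter (fun j => f j = i)).card ≤ u)
    (hHsub : ∑ j, (‖x j - π (x j)‖ ^ 2 + ‖π (x j) - π (c (f j))‖ ^ 2 +
      ‖π (c (f j)) - c (f j)‖ ^ 2) ≤ optH) :
    ∑ j, ‖x j - c (f j)‖ ^ 2 ≤ (69 + ε) * optD := by
  classical
  -- a feasible assignment exists
  obtain ⟨f₀, hf₀⟩ : ∃ f₀ : Fin n → Fin k,
      ∀ i : Fin k, (Finset.univ.filter (fun j => f₀ j = i)).card ≤ u := by
    rcases Nat.eq_zero_or_pos u with hu | hu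
    · subst hu
      have hn : n = 0 := by omega
      subst hn
      exact ⟨fun j => j.elim0, fun i => by simp⟩
    · refine ⟨fun j => ⟨j.val / u, (Nat.div_lt_iff_lt_mul hu).mpr (lt_of_lt_of_le j.isLt hfeas)⟩,
        fun i => ?_⟩
      have := card_div_fiber n u hu i.val
      refine le_trans (le_of_eq ?_) this
      congr 1
      ext j
      simp [Fin.ext_iff]
  -- the three sets
  set KMset : Set ℝ := {r : ℝ | ∃ (c : Fin k → EuclideanSpace ℝ (Fin d)) (f : Fin n → Fin k),
      r = ∑ j, ‖x j - c (f j)‖ ^ 2} with hKMset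
  set Dset : Set ℝ := {r : ℝ | ∃ (c : Fin k → EuclideanSpace ℝ (Fin d)) (f : Fin n → Fin k),
      (∀ i : Fin k, (Finset.univ.filter (fun j => f j = i)).card ≤ u) ∧
      r = ∑ j, ‖x j - c (f j)‖ ^ 2} with hDset
  set Hset : Set ℝ := {r : ℝ | ∃ (c : Fin k → EuclideanSpace ℝ (Fin d)) (f : Fin n → Fin k),
      (∀ i : Fin k, (Finset.univ.filter (fun j => f j = i)).card ≤ u) ∧
      r = ∑ j, (‖x j - π (x j)‖ ^ 2 + ‖π (x j) - π (c (f j))‖ ^ 2 +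
        ‖π (c (f j)) - c (f j)‖ ^ 2)} with hHset
  have hDne : Dset.Nonempty := ⟨_, ⟨fun _ => (0 : EuclideanSpace ℝ (Fin d)), f₀, hf₀, rfl⟩⟩
  have hKMnonneg : ∀ r ∈ KMset, (0:ℝ) ≤ r := by
    rintro r ⟨c', f', rfl⟩
    exact Finset.sum_nonneg fun j _ => by positivity
  have hDnonneg : ∀ r ∈ Dset, (0:ℝ) ≤ r := by
    rintro r ⟨c', f', _, rfl⟩
    exact Finset.sum_nonneg fun j _ => by positivity
  have hHnonneg : ∀ r ∈ Hset, (0:ℝ) ≤ r := by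
    rintro r ⟨c', f', _, rfl⟩
    exact Finset.sum_nonneg fun j _ => by positivity
  have hKMbdd : BddBelow KMset := ⟨0, fun r hr => hKMnonneg r hr⟩
  have hDbdd : BddBelow Dset := ⟨0, fun r hr => hDnonneg r hr⟩
  have hHbdd : BddBelow Hset := ⟨0, fun r hr => hHnonneg r hr⟩
  have hoptD0 : 0 ≤ optD := by
    rw [hoptD]
    exact le_csInf hDne (fun r hr => hDnonneg r hr)
  have hKMD : optKM ≤ optD := by
    rw [hoptKM, hoptD]
    exact csInf_le_csInf hKMbdd hDne (by rintro r ⟨c', f', _, rfl⟩; exact ⟨c', f', rfl⟩)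
  -- pointwise relaxed triangle inequalities
  have key3 : ∀ a b : EuclideanSpace ℝ (Fin d), ‖a - b‖ ^ 2 ≤
      3 * (‖a - π a‖ ^ 2 + ‖π a - π b‖ ^ 2 + ‖π b - b‖ ^ 2) := by
    intro a b
    have t : ‖a - b‖ ≤ ‖a - π a‖ + ‖π a - π b‖ + ‖π b - b‖ := by
      calc ‖a - b‖ = ‖(a - π a) + (π a - π b) + (π b - b)‖ := by congr 1; abel
        _ ≤ ‖a - π a‖ + ‖π a - π b‖ + ‖π b - b‖ := norm_add₃_le
    nlinarith [norm_nonneg (a - b), norm_nonneg (a - π a), norm_nonneg (π a - π b),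
      norm_nonneg (π b - b), sq_nonneg (‖a - π a‖ - ‖π a - π b‖),
      sq_nonneg (‖a - π a‖ - ‖π b - b‖), sq_nonneg (‖π a - π b‖ - ‖π b - b‖)]
  have key : ∀ a b : EuclideanSpace ℝ (Fin d),
      ‖a - π a‖ ^ 2 + ‖π a - π b‖ ^ 2 + ‖π b - b‖ ^ 2 ≤
      11 * ‖a - π a‖ ^ 2 + 10 * ‖a - b‖ ^ 2 := by
    intro a b
    have h1 : ‖b - π b‖ ^ 2 ≤ ‖b - π a‖ ^ 2 := hπnear b (π a) (hπS a)
    have t1 : ‖b - π a‖ ≤ ‖a - b‖ + ‖a - π a‖ := by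
      calc ‖b - π a‖ = ‖(b - a) + (a - π a)‖ := by congr 1; abel
        _ ≤ ‖b - a‖ + ‖a - π a‖ := norm_add_le _ _
        _ = ‖a - b‖ + ‖a - π a‖ := by rw [norm_sub_rev]
    have t2 : ‖π a - π b‖ ≤ ‖b - π a‖ + ‖b - π b‖ := by
      calc ‖π a - π b‖ = ‖(π a - b) + (b - π b)‖ := by congr 1; abel
        _ ≤ ‖π a - b‖ + ‖b - π b‖ := norm_add_le _ _
        _ = ‖b - π a‖ + ‖b - π b‖ := by rw [norm_sub_rev]
    have e1 : ‖π b - b‖ = ‖b - π b‖ := norm_sub_rev _ _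
    have p1 : ‖π a - π b‖ ^ 2 ≤ (‖b - π a‖ + ‖b - π b‖) ^ 2 :=
      pow_le_pow_left₀ (norm_nonneg _) t2 2
    have p2 : ‖b - π a‖ ^ 2 ≤ (‖a - b‖ + ‖a - π a‖) ^ 2 :=
      pow_le_pow_left₀ (norm_nonneg _) t1 2
    nlinarith [norm_nonneg (b - π a), norm_nonneg (a - b), norm_nonneg (a - π a),
      norm_nonneg (b - π b), norm_nonneg (π a - π b),
      sq_nonneg (‖b - π a‖ - ‖b - π b‖), sq_nonneg (‖a - b‖ - ‖a - π a‖)]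
  -- T := projection cost
  set T : ℝ := ∑ j, ‖x j - π (x j)‖ ^ 2 with hT
  -- optH ≤ 10 * optD + 11 * T
  have hHD : optH ≤ 10 * optD + 11 * T := by
    have hstep : ∀ r ∈ Dset, optH ≤ 10 * r + 11 * T := by
      rintro r ⟨c', f', hc', rfl⟩
      have hmem : (∑ j, (‖x j - π (x j)‖ ^ 2 + ‖π (x j) - π (c' (f' j))‖ ^ 2 +
          ‖π (c' (f' j)) - c' (f' j)‖ ^ 2)) ∈ Hset := ⟨c', f', hc', rfl⟩
      have h1 : optH ≤ ∑ j, (‖x j - π (x j)‖ ^ 2 + ‖π (x j) - π (c' (f' j))‖ ^ 2 +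
          ‖π (c' (f' j)) - c' (f' j)‖ ^ 2) := hoptH ▸ csInf_le hHbdd hmem
      have h2 : ∑ j, (‖x j - π (x j)‖ ^ 2 + ‖π (x j) - π (c' (f' j))‖ ^ 2 +
          ‖π (c' (f' j)) - c' (f' j)‖ ^ 2) ≤
          ∑ j, (11 * ‖x j - π (x j)‖ ^ 2 + 10 * ‖x j - c' (f' j)‖ ^ 2) :=
        Finset.sum_le_sum fun j _ => key (x j) (c' (f' j))
      have h3 : ∑ j, (11 * ‖x j - π (x j)‖ ^ 2 + 10 * ‖x j - c' (f' j)‖ ^ 2) =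
          11 * T + 10 * ∑ j, ‖x j - c' (f' j)‖ ^ 2 := by
        rw [Finset.sum_add_distrib, ← Finset.mul_sum, ← Finset.mul_sum]
      linarith
    have : (optH - 11 * T) / 10 ≤ optD := by
      rw [hoptD]
      exact le_csInf hDne fun r hr => by linarith [hstep r hr]
    linarith
  -- main cost bound
  have hcost : ∑ j, ‖x j - c (f j)‖ ^ 2 ≤ 3 * optH := by
    have h1 : ∑ j, ‖x j - c (f j)‖ ^ 2 ≤
        ∑ j, 3 * (‖x j - π (x j)‖ ^ 2 + ‖π (x j) - π (c (f j))‖ ^ 2 +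
          ‖π (c (f j)) - c (f j)‖ ^ 2) :=
      Finset.sum_le_sum fun j _ => key3 (x j) (c (f j))
    rw [← Finset.mul_sum] at h1
    nlinarith [hHsub]
  have hcoef : (0:ℝ) ≤ 33 * (1 + ε / 36) := by nlinarith
  have hchain : 33 * T ≤ 33 * (1 + ε / 36) * optD := by
    have h1 : 33 * T ≤ 33 * ((1 + ε / 36) * optKM) := by linarith [hKMsub]
    have h2 : 33 * (1 + ε / 36) * optKM ≤ 33 * (1 + ε / 36) * optD :=
      mul_le_mul_of_nonneg_left hKMD hcoef
    linarith
  nlinarith [hcost, hHD, hchain, hoptD0, hε.le, mul_nonneg hε.le hoptD0]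
end
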